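/- arXiv:1211.6083 — 4 statements merged into one kernel-verified Lean document; each statement's English description precedes it below -/
import Mathlib

section
/- Let d ≥ 2 and let f be a probability density on S^{d−1} with Q-tensor Q_f. Then every eigenvalue λ of Q_f satisfies the strict inequalities −1/d < λ < 1 − 1/d; i.e. Q_f is physical. -/
open MeasureTheory Matrix

noncomputable section

/-- The unit sphere `S^{d-1} ⊂ ℝ^d`. -/
abbrev Sph (d : ℕ) := Metric.sphere (0 : EuclideanSpace ℝ (Fin d)) 1

/-- The surface (spherical) measure `σ` on the unit sphere `S^{d-1}`. -/
noncomputable def sphMeasure (d : ℕ) : Measure (Sph d) :=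
  (volume : Measure (EuclideanSpace ℝ (Fin d))).toSphere

/-- The Q-tensor of a density `f` on the sphere:
`Q_f = ∫_{S^{d-1}} (ω ⊗ ω - (1/d) I) f(ω) dσ(ω)`, defined entrywise. -/
noncomputable def Qtensor (d : ℕ) (f : Sph d → ℝ) : Matrix (Fin d) (Fin d) ℝ :=
  Matrix.of fun i j =>
    ∫ ω : Sph d,
      ((ω : EuclideanSpace ℝ (Fin d)) i * (ω : EuclideanSpace ℝ (Fin d)) j
        - if i = j then (1 : ℝ) / d else 0) * f ω ∂(sphMeasure d)

/-!
Testing `Q_f` against an eigenvector `x` gives `(λ + 1/d) ‖x‖² = ∫ ⟪x, ω⟫² f dσ`. On the sphere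
`0 ≤ ⟪x, ω⟫² ≤ ‖x‖²`, with equality on the left only on `x^⊥` and on the right only on the line
`ℝ x`. Both are proper subspaces (the line because `d ≥ 2`), so they meet the sphere in a
`σ`-null set, and since `f` has mass one the integral lies strictly between `0` and `‖x‖²`.
-/

open scoped RealInnerProductSpace Pointwise

section Integration

variable {X : Type*} [MeasurableSpace X] {μ : Measure X}

theorem integral_mul_pos_of_ae_pos {f g : X → ℝ} (hf : 0 ≤ᵐ[μ] f)
    (hf_ne : ∫ x, f x ∂μ ≠ 0) (hg : ∀ᵐ x ∂μ, 0 < g x)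
    (hgf : Integrable (fun x => g x * f x) μ) :
    0 < ∫ x, g x * f x ∂μ := by
  have hgf_nonneg : 0 ≤ᵐ[μ] fun x => g x * f x := by
    filter_upwards [hf, hg] with x hfx hgx using mul_nonneg hgx.le hfx
  refine (integral_nonneg_of_ae hgf_nonneg).lt_of_ne fun h => hf_ne ?_
  have hgf_zero := (integral_eq_zero_iff_of_nonneg_ae hgf_nonneg hgf).mp h.symm
  refine integral_eq_zero_of_ae ?_
  filter_upwards [hgf_zero, hg] with x hx hgx
  exact (mul_eq_zero.mp hx).resolve_left hgx.ne'

theorem integral_sub_mul_of_integral_eq_one {f g : X → ℝ} (c : ℝ) (hf : Integrable f μ)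
    (hf_mass : ∫ x, f x ∂μ = 1) (hgf : Integrable (fun x => g x * f x) μ) :
    ∫ x, (g x - c) * f x ∂μ = ∫ x, g x * f x ∂μ - c := by
  simp only [sub_mul]
  rw [integral_sub hgf (hf.const_mul c), integral_const_mul, hf_mass, mul_one]

theorem integral_const_sub_mul_of_integral_eq_one {f g : X → ℝ} (c : ℝ) (hf : Integrable f μ)
    (hf_mass : ∫ x, f x ∂μ = 1) (hgf : Integrable (fun x => g x * f x) μ) :
    ∫ x, (c - g x) * f x ∂μ = c - ∫ x, g x * f x ∂μ := by
  calc ∫ x, (c - g x) * f x ∂μ = -∫ x, (g x - c) * f x ∂μ := by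
        rw [← integral_neg]
        congr 1 with x
        ring
    _ = c - ∫ x, g x * f x ∂μ := by
        rw [integral_sub_mul_of_integral_eq_one c hf hf_mass hgf, neg_sub]

theorem MeasureTheory.Integrable.continuous_mul_of_compactSpace [TopologicalSpace X]
    [CompactSpace X] [TopologicalSpace.PseudoMetrizableSpace X] [OpensMeasurableSpace X]
    {f g : X → ℝ}
    (hg : Continuous g) (hf : Integrable f μ) : Integrable (fun x => g x * f x) μ :=
  let G := BoundedContinuousFunction.mkOfCompact ⟨g, hg⟩
  hf.bdd_mul hg.aestronglyMeasurable (.of_forall G.norm_coe_le_norm)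

theorem dotProduct_of_integral_mul_mulVec {ι : Type*} [Fintype ι] (M : X → Matrix ι ι ℝ)
    (f : X → ℝ) (hM : ∀ i j, Integrable (fun x => M x i j * f x) μ) (v : ι → ℝ) :
    v ⬝ᵥ (of (fun i j => ∫ x, M x i j * f x ∂μ) *ᵥ v) = ∫ x, (v ⬝ᵥ (M x *ᵥ v)) * f x ∂μ := by
  have hint : ∀ i j, Integrable (fun x => v i * (M x i j * f x * v j)) μ := fun i j =>
    ((hM i j).mul_const _).const_mul _
  calc v ⬝ᵥ (of (fun i j => ∫ x, M x i j * f x ∂μ) *ᵥ v)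
      = ∑ i, ∑ j, ∫ x, v i * (M x i j * f x * v j) ∂μ := by
        simp only [dotProduct, mulVec, of_apply, Finset.mul_sum, integral_mul_const,
          integral_const_mul]
    _ = ∫ x, ∑ i, ∑ j, v i * (M x i j * f x * v j) ∂μ := by
        rw [integral_finsetSum _ fun i _ => integrable_finsetSum _ fun j _ => hint i j]
        simp only [integral_finsetSum _ fun j _ => hint _ j]
    _ = ∫ x, (v ⬝ᵥ (M x *ᵥ v)) * f x ∂μ := by
        simp only [dotProduct, mulVec, Finset.mul_sum, Finset.sum_mul]
        exact integral_congr_ae (.of_forall fun x =>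
          Finset.sum_congr rfl fun i _ => Finset.sum_congr rfl fun j _ => by ring)

end Integration

section InnerProductSpace

variable {E : Type*} [NormedAddCommGroup E] [InnerProductSpace ℝ E]

theorem abs_real_inner_lt_norm_mul_norm_of_notMem_span {x y : E} (hx : x ≠ 0)
    (hy : y ∉ ℝ ∙ x) : |⟪x, y⟫| < ‖x‖ * ‖y‖ := by
  refine (abs_real_inner_le_norm x y).lt_of_ne fun h => ?_
  have := ((norm_inner_eq_norm_tfae ℝ x y).out 0 3).mp h
  tauto

variable [FiniteDimensional ℝ E] [MeasurableSpace E] [BorelSpace E]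
  (μ : Measure E) [μ.IsAddHaarMeasure]

/-- `toSphere` measures the cone over a set, and the cone over a subset of `W` lies in `W`. -/
theorem MeasureTheory.Measure.ae_toSphere_notMem_submodule {W : Submodule ℝ E} (hW : W ≠ ⊤) :
    ∀ᵐ ω : Metric.sphere (0 : E) 1 ∂μ.toSphere, (ω : E) ∉ W := by
  set S : Set (Metric.sphere (0 : E) 1) := Subtype.val ⁻¹' (W : Set E)
  have hSm : MeasurableSet S :=
    W.closed_of_finiteDimensional.measurableSet.preimage measurable_subtype_coe
  have hcone : Set.Ioo (0 : ℝ) 1 • Subtype.val '' S ⊆ (W : Set E) := by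
    rintro _ ⟨r, -, _, ⟨ω, hω, rfl⟩, rfl⟩
    exact W.smul_mem r hω
  rw [ae_iff]
  refine measure_mono_null (t := S) (fun ω hω => not_not.mp hω) ?_
  rw [Measure.toSphere_apply' μ hSm, measure_mono_null hcone (μ.addHaar_submodule W hW), mul_zero]

theorem MeasureTheory.Measure.ae_toSphere_inner_ne_zero {x : E} (hx : x ≠ 0) :
    ∀ᵐ ω : Metric.sphere (0 : E) 1 ∂μ.toSphere, ⟪x, (ω : E)⟫ ≠ 0 := by
  have hW : (ℝ ∙ x)ᗮ ≠ ⊤ := by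
    rwa [Ne, Submodule.orthogonal_eq_top_iff, Submodule.span_singleton_eq_bot]
  filter_upwards [μ.ae_toSphere_notMem_submodule hW] with ω hω
  exact fun h => hω (Submodule.mem_orthogonal_singleton_iff_inner_right.mpr h)

theorem MeasureTheory.Measure.ae_toSphere_sq_inner_lt {x : E} (hx : x ≠ 0)
    (hE : 2 ≤ Module.finrank ℝ E) :
    ∀ᵐ ω : Metric.sphere (0 : E) 1 ∂μ.toSphere, ⟪x, (ω : E)⟫ ^ 2 < ‖x‖ ^ 2 := by
  have hW : ℝ ∙ x ≠ ⊤ := fun h => by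
    have := finrank_span_singleton (K := ℝ) hx
    rw [h, finrank_top] at this
    omega
  filter_upwards [μ.ae_toSphere_notMem_submodule hW] with ω hω
  have hlt := abs_real_inner_lt_norm_mul_norm_of_notMem_span hx hω
  rw [norm_eq_of_mem_sphere ω, mul_one] at hlt
  exact sq_lt_sq' (abs_lt.mp hlt).1 (abs_lt.mp hlt).2

end InnerProductSpace

theorem EuclideanSpace.real_inner_eq_dotProduct {ι : Type*} [Fintype ι]
    (x y : EuclideanSpace ℝ ι) : ⟪x, y⟫ = x.ofLp ⬝ᵥ y.ofLp := by
  simp [EuclideanSpace.inner_eq_star_dotProduct, dotProduct_comm]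

theorem dotProduct_vecMulVec_sub_diagonal_mulVec {ι : Type*} [Fintype ι] [DecidableEq ι]
    (x ω : EuclideanSpace ℝ ι) (t : ℝ) :
    x.ofLp ⬝ᵥ ((vecMulVec ω.ofLp ω.ofLp - diagonal fun _ => t) *ᵥ x.ofLp) =
      ⟪x, ω⟫ ^ 2 - t * ‖x‖ ^ 2 := by
  rw [EuclideanSpace.real_inner_eq_dotProduct, ← real_inner_self_eq_norm_sq,
    EuclideanSpace.real_inner_eq_dotProduct, ← smul_one_eq_diagonal, sub_mulVec,
    vecMulVec_mulVec, smul_mulVec, one_mulVec, dotProduct_sub, dotProduct_smul, dotProduct_smul,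
    dotProduct_comm x.ofLp ω.ofLp]
  simp [sq]

theorem dotProduct_Qtensor_mulVec {d : ℕ} {f : Sph d → ℝ} (hf : Integrable f (sphMeasure d))
    (x : EuclideanSpace ℝ (Fin d)) :
    x.ofLp ⬝ᵥ (Qtensor d f *ᵥ x.ofLp) =
      ∫ ω, (⟪x, (ω : EuclideanSpace ℝ (Fin d))⟫ ^ 2 - ‖x‖ ^ 2 / d) * f ω ∂(sphMeasure d) := by
  have hentry : ∀ i j, Continuous fun ω : Sph d =>
      (ω : EuclideanSpace ℝ (Fin d)) i * (ω : EuclideanSpace ℝ (Fin d)) j -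
        if i = j then (1 : ℝ) / d else 0 := by
    intro i j
    fun_prop
  have h := dotProduct_of_integral_mul_mulVec (μ := sphMeasure d)
    (fun ω : Sph d => vecMulVec (ω : EuclideanSpace ℝ (Fin d)).ofLp
      (ω : EuclideanSpace ℝ (Fin d)).ofLp - diagonal fun _ => (1 : ℝ) / d) f
    (fun i j => hf.continuous_mul_of_compactSpace (hentry i j)) x.ofLp
  refine h.trans (integral_congr_ae (.of_forall fun ω => ?_))
  dsimp only
  rw [dotProduct_vecMulVec_sub_diagonal_mulVec]
  ring

/-- If `f` is a probability density on `S^{d-1}` (`d ≥ 2`) with Q-tensor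
`Q_f`, then every eigenvalue `λ` of `Q_f` satisfies `-1/d < λ < 1 - 1/d`,
i.e. `Q_f` is physical. -/
theorem qtensor_physical (d : ℕ) (hd : 2 ≤ d) (f : Sph d → ℝ)
    (hf_int : Integrable f (sphMeasure d)) (hf_nonneg : ∀ ω, 0 ≤ f ω)
    (hf_mass : ∫ ω, f ω ∂(sphMeasure d) = 1)
    (lam : ℝ) (v : Fin d → ℝ) (hv : v ≠ 0)
    (heig : (Qtensor d f).mulVec v = lam • v) :
    -(1 / d) < lam ∧ lam < 1 - 1 / d := by
  set x : EuclideanSpace ℝ (Fin d) := WithLp.toLp 2 v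
  have hx : x ≠ 0 := by simpa [x] using hv
  have hcont : Continuous fun ω : Sph d => ⟪x, (ω : EuclideanSpace ℝ (Fin d))⟫ ^ 2 := by
    fun_prop
  set I := ∫ ω, ⟪x, (ω : EuclideanSpace ℝ (Fin d))⟫ ^ 2 * f ω ∂sphMeasure d
  have hquad : (lam + 1 / d) * ‖x‖ ^ 2 = I := by
    have hv2 : v ⬝ᵥ v = ‖x‖ ^ 2 := by
      rw [← real_inner_self_eq_norm_sq, EuclideanSpace.real_inner_eq_dotProduct]
    have h := dotProduct_Qtensor_mulVec hf_int x
    rw [integral_sub_mul_of_integral_eq_one _ hf_int hf_mass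
      (hf_int.continuous_mul_of_compactSpace hcont)] at h
    simp only [x, heig, dotProduct_smul, hv2, smul_eq_mul] at h
    linear_combination h
  have hlower : 0 < I :=
    integral_mul_pos_of_ae_pos (μ := sphMeasure d) (.of_forall hf_nonneg)
      (hf_mass ▸ one_ne_zero)
      ((volume : Measure (EuclideanSpace ℝ (Fin d))).ae_toSphere_inner_ne_zero hx |>.mono
        fun ω h => by positivity)
      (hf_int.continuous_mul_of_compactSpace hcont)
  have hupper : I < ‖x‖ ^ 2 := by
    have h := integral_mul_pos_of_ae_pos (μ := sphMeasure d) (.of_forall hf_nonneg)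
      (hf_mass ▸ one_ne_zero)
      ((volume : Measure (EuclideanSpace ℝ (Fin d))).ae_toSphere_sq_inner_lt hx
        (by simpa using hd) |>.mono fun ω h => sub_pos.mpr h)
      (hf_int.continuous_mul_of_compactSpace (continuous_const.sub hcont))
    rwa [integral_const_sub_mul_of_integral_eq_one _ hf_int hf_mass
      (hf_int.continuous_mul_of_compactSpace hcont), sub_pos] at h
  have hx2 : 0 < ‖x‖ ^ 2 := by positivity
  constructor <;> nlinarith
end
end

section
/- Let d ≥ 2. The Ball–Majumdar potential ψ is convex on Sym₀(d): for all Q₀, Q₁ ∈ Sym₀(d) and t ∈ [0,1], ψ((1−t)Q₀ + tQ₁) ≤ (1−t)ψ(Q₀) + tψ(Q₁) in ℝ ∪ {+∞}. In particular, the effective domain D(ψ) := {Q ∈ Sym₀(d) : ψ(Q) < ∞} is a convex subset of Sym₀(d). -/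
open MeasureTheory Matrix

noncomputable section

/-- The class `A_Q` of probability densities on the sphere whose Q-tensor is `Q`. -/
def densityClass (d : ℕ) (Q : Matrix (Fin d) (Fin d) ℝ) (ρ : Sph d → ℝ) : Prop :=
  Integrable ρ (sphMeasure d) ∧ (∀ ω, 0 ≤ ρ ω) ∧
    (∫ ω, ρ ω ∂(sphMeasure d)) = 1 ∧ Qtensor d ρ = Q

/-- The entropy `∫_{S^{d-1}} ρ log ρ dσ` of a density `ρ`. -/
noncomputable def entropy (d : ℕ) (ρ : Sph d → ℝ) : ℝ :=
  ∫ ω, ρ ω * Real.log (ρ ω) ∂(sphMeasure d)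

/-- The Ball–Majumdar singular potential
`ψ(Q) := inf { ∫ ρ log ρ dσ : ρ ∈ A_Q, ρ log ρ σ-integrable }`, valued in `ℝ ∪ {+∞}`
(realised as `EReal`, with `sInf ∅ = +∞`). -/
noncomputable def BMpsi (d : ℕ) (Q : Matrix (Fin d) (Fin d) ℝ) : EReal :=
  sInf { x : EReal | ∃ ρ : Sph d → ℝ, densityClass d Q ρ ∧
    Integrable (fun ω => ρ ω * Real.log (ρ ω)) (sphMeasure d) ∧ x = (entropy d ρ : EReal) }

/-!
A density admissible for `(1 - t) Q₀ + t Q₁` is obtained by mixing densities admissible for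
`Q₀` and `Q₁`, because the constraints defining `A_Q` are affine in `ρ`; convexity of
`x ↦ x log x` bounds the entropy of the mixture by the mixture of the entropies. Taking infima
gives the inequality, which is meaningful in `EReal` because `x log x ≥ x - 1` keeps `ψ` away
from `-∞`.
-/

instance (d : ℕ) : IsFiniteMeasure (sphMeasure d) := by
  unfold sphMeasure; infer_instance

section MulLog

variable {α : Type*} [MeasurableSpace α] {μ : Measure α} [IsFiniteMeasure μ]
  {f g : α → ℝ} {a b : ℝ}

lemma integral_sub_measureReal_le_integral_mul_log (hf : Integrable f μ) (hf0 : 0 ≤ᵐ[μ] f)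
    (hfl : Integrable (fun x => f x * Real.log (f x)) μ) :
    ∫ x, f x ∂μ - μ.real Set.univ ≤ ∫ x, f x * Real.log (f x) ∂μ := by
  have hle : (fun x => f x - 1) ≤ᵐ[μ] fun x => f x * Real.log (f x) := by
    filter_upwards [hf0] with x hx using Real.self_sub_one_le_mul_log hx
  simpa [integral_sub hf (integrable_const 1)] using
    integral_mono_ae (hf.sub (integrable_const 1)) hfl hle

lemma mul_log_convexComb_le (ha : 0 ≤ a) (hb : 0 ≤ b) (hab : a + b = 1) {x y : ℝ}
    (hx : 0 ≤ x) (hy : 0 ≤ y) :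
    (a * x + b * y) * Real.log (a * x + b * y)
      ≤ a * (x * Real.log x) + b * (y * Real.log y) :=
  Real.convexOn_mul_log.2 hx hy ha hb hab

lemma integrable_mul_log_convexComb (ha : 0 ≤ a) (hb : 0 ≤ b) (hab : a + b = 1)
    (hf : Integrable f μ) (hg : Integrable g μ) (hf0 : 0 ≤ᵐ[μ] f) (hg0 : 0 ≤ᵐ[μ] g)
    (hfl : Integrable (fun x => f x * Real.log (f x)) μ)
    (hgl : Integrable (fun x => g x * Real.log (g x)) μ) :
    Integrable (fun x => (a * f x + b * g x) * Real.log (a * f x + b * g x)) μ := by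
  have hmix : Integrable (fun x => a * f x + b * g x) μ := (hf.const_mul a).add (hg.const_mul b)
  refine integrable_of_le_of_le
    (Real.continuous_mul_log.comp_aestronglyMeasurable hmix.aestronglyMeasurable)
    ?_ ?_ (hmix.sub (integrable_const 1)) ((hfl.const_mul a).add (hgl.const_mul b))
  · filter_upwards [hf0, hg0] with x hx hy
    exact Real.self_sub_one_le_mul_log (add_nonneg (mul_nonneg ha hx) (mul_nonneg hb hy))
  · filter_upwards [hf0, hg0] with x hx hy
    exact mul_log_convexComb_le ha hb hab hx hy

lemma integral_mul_log_convexComb_le (ha : 0 ≤ a) (hb : 0 ≤ b) (hab : a + b = 1)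
    (hf : Integrable f μ) (hg : Integrable g μ) (hf0 : 0 ≤ᵐ[μ] f) (hg0 : 0 ≤ᵐ[μ] g)
    (hfl : Integrable (fun x => f x * Real.log (f x)) μ)
    (hgl : Integrable (fun x => g x * Real.log (g x)) μ) :
    ∫ x, (a * f x + b * g x) * Real.log (a * f x + b * g x) ∂μ
      ≤ a * ∫ x, f x * Real.log (f x) ∂μ + b * ∫ x, g x * Real.log (g x) ∂μ := by
  rw [← integral_const_mul, ← integral_const_mul,
    ← integral_add (hfl.const_mul a) (hgl.const_mul b)]
  refine integral_mono_ae
    (integrable_mul_log_convexComb ha hb hab hf hg hf0 hg0 hfl hgl)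
    ((hfl.const_mul a).add (hgl.const_mul b)) ?_
  filter_upwards [hf0, hg0] with x hx hy
  exact mul_log_convexComb_le ha hb hab hx hy

end MulLog

lemma EReal.le_coe_mul_add_coe_mul_of_forall_lt {a b c : EReal} {s t : ℝ} (hs : 0 < s)
    (ht : 0 < t) (ha : a ≠ ⊥) (hb : b ≠ ⊥)
    (h : ∀ x y : ℝ, a < x → b < y → c ≤ ((s * x + t * y : ℝ) : EReal)) :
    c ≤ s * a + t * b := by
  induction a using EReal.rec with
  | bot => exact absurd rfl ha
  | top =>
    have htb : (t : EReal) * b ≠ ⊥ := (EReal.mul_ne_bot _ _).2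
      ⟨.inl (EReal.coe_ne_bot t), .inr hb, .inl (EReal.coe_ne_top t),
        .inl (by exact_mod_cast ht.le)⟩
    rw [EReal.mul_top_of_pos (by exact_mod_cast hs), EReal.top_add_of_ne_bot htb]
    exact le_top
  | coe a =>
    induction b using EReal.rec with
    | bot => exact absurd rfl hb
    | top =>
      rw [EReal.mul_top_of_pos (by exact_mod_cast ht), ← EReal.coe_mul, EReal.coe_add_top]
      exact le_top
    | coe b =>
      rw [← EReal.coe_mul, ← EReal.coe_mul, ← EReal.coe_add]
      refine EReal.le_of_forall_lt_iff_le.1 fun z hz => ?_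
      -- spread the gap `z - (s a + t b)` evenly over the two arguments
      set δ := (z - (s * a + t * b)) / (s + t)
      have hδ : 0 < δ := _root_.div_pos (by linarith [EReal.coe_lt_coe_iff.1 hz]) (by linarith)
      have hz' : s * (a + δ) + t * (b + δ) = z := by
        simp only [δ]; field_simp; ring
      rw [← hz']
      exact h _ _ (EReal.coe_lt_coe_iff.2 (by linarith)) (EReal.coe_lt_coe_iff.2 (by linarith))

section Qtensor

variable {d : ℕ}

lemma integrable_qtensorKernel_mul {f : Sph d → ℝ} (hf : Integrable f (sphMeasure d))
    (i j : Fin d) :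
    Integrable (fun ω : Sph d =>
      ((ω : EuclideanSpace ℝ (Fin d)) i * (ω : EuclideanSpace ℝ (Fin d)) j
        - if i = j then (1 : ℝ) / d else 0) * f ω) (sphMeasure d) := by
  have hk : Continuous fun ω : Sph d =>
      (ω : EuclideanSpace ℝ (Fin d)) i * (ω : EuclideanSpace ℝ (Fin d)) j
        - if i = j then (1 : ℝ) / d else 0 := by fun_prop
  exact integrableOn_univ.1 <|
    (integrableOn_univ.2 hf).continuousOn_mul hk.continuousOn isCompact_univ

lemma Qtensor_smul (c : ℝ) (f : Sph d → ℝ) : Qtensor d (c • f) = c • Qtensor d f := by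
  ext i j
  simp only [Qtensor, of_apply, Matrix.smul_apply, Pi.smul_apply, smul_eq_mul, mul_left_comm _ c,
    integral_const_mul]

lemma Qtensor_add {f g : Sph d → ℝ} (hf : Integrable f (sphMeasure d))
    (hg : Integrable g (sphMeasure d)) : Qtensor d (f + g) = Qtensor d f + Qtensor d g := by
  ext i j
  simp only [Qtensor, of_apply, Matrix.add_apply, Pi.add_apply, mul_add,
    integral_add (integrable_qtensorKernel_mul hf i j) (integrable_qtensorKernel_mul hg i j)]

end Qtensor

section BMpsi

variable {d : ℕ} {Q Q₀ Q₁ : Matrix (Fin d) (Fin d) ℝ} {ρ ρ₀ ρ₁ : Sph d → ℝ} {a b : ℝ}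

lemma densityClass.convexComb (h₀ : densityClass d Q₀ ρ₀) (h₁ : densityClass d Q₁ ρ₁)
    (ha : 0 ≤ a) (hb : 0 ≤ b) (hab : a + b = 1) :
    densityClass d (a • Q₀ + b • Q₁) (a • ρ₀ + b • ρ₁) := by
  obtain ⟨hint₀, hpos₀, hmass₀, hQ₀⟩ := h₀
  obtain ⟨hint₁, hpos₁, hmass₁, hQ₁⟩ := h₁
  refine ⟨(hint₀.smul a).add (hint₁.smul b),
    fun ω => add_nonneg (smul_nonneg ha (hpos₀ ω)) (smul_nonneg hb (hpos₁ ω)), ?_, ?_⟩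
  · simp only [Pi.add_apply, Pi.smul_apply, smul_eq_mul]
    rw [integral_add (hint₀.const_mul a) (hint₁.const_mul b), integral_const_mul,
      integral_const_mul, hmass₀, hmass₁, mul_one, mul_one, hab]
  · rw [Qtensor_add (hint₀.smul a) (hint₁.smul b), Qtensor_smul, Qtensor_smul, hQ₀, hQ₁]

lemma BMpsi_le_entropy (hρ : densityClass d Q ρ)
    (hρl : Integrable (fun ω => ρ ω * Real.log (ρ ω)) (sphMeasure d)) :
    BMpsi d Q ≤ entropy d ρ :=
  sInf_le ⟨ρ, hρ, hρl, rfl⟩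

lemma exists_entropy_lt_of_BMpsi_lt {x : ℝ} (h : BMpsi d Q < x) :
    ∃ ρ, densityClass d Q ρ ∧ Integrable (fun ω => ρ ω * Real.log (ρ ω)) (sphMeasure d) ∧
      entropy d ρ < x := by
  obtain ⟨_, ⟨ρ, hρ, hρl, rfl⟩, hlt⟩ := sInf_lt_iff.1 h
  exact ⟨ρ, hρ, hρl, EReal.coe_lt_coe_iff.1 hlt⟩

lemma BMpsi_ne_bot : BMpsi d Q ≠ ⊥ := by
  refine ne_bot_of_le_ne_bot (EReal.coe_ne_bot (1 - (sphMeasure d).real Set.univ)) <| le_sInf ?_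
  rintro _ ⟨ρ, ⟨hint, hpos, hmass, -⟩, hρl, rfl⟩
  rw [EReal.coe_le_coe_iff, ← hmass]
  exact integral_sub_measureReal_le_integral_mul_log hint (ae_of_all _ hpos) hρl

lemma BMpsi_convexComb_le (ha : 0 ≤ a) (hb : 0 ≤ b) (hab : a + b = 1) :
    BMpsi d (a • Q₀ + b • Q₁) ≤ (a : EReal) * BMpsi d Q₀ + (b : EReal) * BMpsi d Q₁ := by
  rcases ha.eq_or_lt with rfl | ha
  · obtain rfl : b = 1 := by linarith
    simp
  rcases hb.eq_or_lt with rfl | hb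
  · obtain rfl : a = 1 := by linarith
    simp
  refine EReal.le_coe_mul_add_coe_mul_of_forall_lt ha hb BMpsi_ne_bot BMpsi_ne_bot
    fun x y hx hy => ?_
  obtain ⟨ρ₀, h₀, hl₀, hx⟩ := exists_entropy_lt_of_BMpsi_lt hx
  obtain ⟨ρ₁, h₁, hl₁, hy⟩ := exists_entropy_lt_of_BMpsi_lt hy
  have hρ₀ : 0 ≤ᵐ[sphMeasure d] ρ₀ := ae_of_all _ h₀.2.1
  have hρ₁ : 0 ≤ᵐ[sphMeasure d] ρ₁ := ae_of_all _ h₁.2.1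
  calc BMpsi d (a • Q₀ + b • Q₁) ≤ entropy d (a • ρ₀ + b • ρ₁) :=
        BMpsi_le_entropy (h₀.convexComb h₁ ha.le hb.le hab)
          (integrable_mul_log_convexComb ha.le hb.le hab h₀.1 h₁.1 hρ₀ hρ₁ hl₀ hl₁)
    _ ≤ ((a * entropy d ρ₀ + b * entropy d ρ₁ : ℝ) : EReal) := EReal.coe_le_coe_iff.2 <|
        integral_mul_log_convexComb_le ha.le hb.le hab h₀.1 h₁.1 hρ₀ hρ₁ hl₀ hl₁
    _ ≤ ((a * x + b * y : ℝ) : EReal) := by gcongr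

lemma BMpsi_convexComb_lt_top (ha : 0 ≤ a) (hb : 0 ≤ b) (hab : a + b = 1)
    (h₀ : BMpsi d Q₀ < ⊤) (h₁ : BMpsi d Q₁ < ⊤) : BMpsi d (a • Q₀ + b • Q₁) < ⊤ := by
  refine (BMpsi_convexComb_le ha hb hab).trans_lt ?_
  rw [← EReal.coe_toReal h₀.ne BMpsi_ne_bot, ← EReal.coe_toReal h₁.ne BMpsi_ne_bot]
  exact_mod_cast EReal.coe_lt_top _

end BMpsi

theorem BMpsi_convex_general (d : ℕ) :
    (∀ Q₀ Q₁ : Matrix (Fin d) (Fin d) ℝ, Q₀ᵀ = Q₀ → Q₀.trace = 0 → Q₁ᵀ = Q₁ → Q₁.trace = 0 →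
      ∀ t : ℝ, t ∈ Set.Icc (0 : ℝ) 1 →
        BMpsi d ((1 - t) • Q₀ + t • Q₁)
          ≤ ((1 - t : ℝ) : EReal) * BMpsi d Q₀ + ((t : ℝ) : EReal) * BMpsi d Q₁) ∧
    Convex ℝ { Q : Matrix (Fin d) (Fin d) ℝ | Qᵀ = Q ∧ Q.trace = 0 ∧ BMpsi d Q < ⊤ } := by
  refine ⟨fun Q₀ Q₁ _ _ _ _ t ht =>
    BMpsi_convexComb_le (sub_nonneg.2 ht.2) ht.1 (sub_add_cancel 1 t), ?_⟩
  rintro Q₀ ⟨hT₀, htr₀, hψ₀⟩ Q₁ ⟨hT₁, htr₁, hψ₁⟩ a b ha hb hab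
  exact ⟨by simp [hT₀, hT₁], by simp [htr₀, htr₁], BMpsi_convexComb_lt_top ha hb hab hψ₀ hψ₁⟩

/-- The Ball–Majumdar potential `ψ` is convex on `Sym₀(d)`:
`ψ((1-t)Q₀ + tQ₁) ≤ (1-t)ψ(Q₀) + tψ(Q₁)` in `ℝ ∪ {+∞}`, and in particular its
effective domain `D(ψ) = {Q ∈ Sym₀(d) : ψ(Q) < ∞}` is a convex set. -/
theorem BMpsi_convex (d : ℕ) (hd : 2 ≤ d) :
    (∀ Q₀ Q₁ : Matrix (Fin d) (Fin d) ℝ, Q₀ᵀ = Q₀ → Q₀.trace = 0 → Q₁ᵀ = Q₁ → Q₁.trace = 0 →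
      ∀ t : ℝ, t ∈ Set.Icc (0 : ℝ) 1 →
        BMpsi d ((1 - t) • Q₀ + t • Q₁)
          ≤ ((1 - t : ℝ) : EReal) * BMpsi d Q₀ + ((t : ℝ) : EReal) * BMpsi d Q₁) ∧
    Convex ℝ { Q : Matrix (Fin d) (Fin d) ℝ | Qᵀ = Q ∧ Q.trace = 0 ∧ BMpsi d Q < ⊤ } :=
  BMpsi_convex_general d
end
end

section
/- Let d ≥ 2 and let φ : ℝ^{d×d} → ℝ be differentiable and invariant under rotations and transposition, i.e. φ(R X Rᵀ) = φ(X) for all X ∈ ℝ^{d×d} and all R ∈ SO(d), and φ(Xᵀ) = φ(X) for all X. Then for every symmetric matrix Q, the gradient ∇φ(Q) (the matrix representing the Fréchet derivative of φ at Q with respect to the Frobenius inner product) commutes with Q: Q ∇φ(Q) = ∇φ(Q) Q. -/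
/-!
Rotating `Q` along `t ↦ exp (t A) Q exp (t A)ᵀ` with `A` skew leaves `φ` constant, so the
gradient is Frobenius-orthogonal to every commutator `A Q - Q A`. Transposition invariance
makes `G` symmetric, hence `N = Q G - G Q` is itself skew, and taking `A = N` gives
`tr (Nᵀ N) = 0`.
-/

open Matrix NormedSpace

attribute [local instance] Matrix.normedAddCommGroup Matrix.normedSpace

namespace Matrix

section Trace

variable {n : Type*} [Fintype n]

theorem eq_zero_of_forall_trace_transpose_mul_eq_zero {M : Matrix n n ℝ}
    (h : ∀ Y, (Mᵀ * Y).trace = 0) : M = 0 := by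
  rw [← trace_conjTranspose_mul_self_eq_zero_iff, conjTranspose_eq_transpose_of_trivial]
  exact h M

theorem transpose_eq_of_forall_trace_mul_transpose {G : Matrix n n ℝ}
    (h : ∀ Y, (Gᵀ * Yᵀ).trace = (Gᵀ * Y).trace) : Gᵀ = G := by
  refine (sub_eq_zero.mp (eq_zero_of_forall_trace_transpose_mul_eq_zero fun Y => ?_)).symm
  rw [transpose_sub, transpose_transpose, sub_mul, trace_sub, ← h, ← trace_transpose (G * Y),
    transpose_mul, trace_mul_comm, sub_self]

/-- `N = Q G - G Q` is skew, and the direction `A = N` gives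
`tr (Gᵀ (N Q - Q N)) = tr (N N) = - tr (Nᵀ N)`. -/
theorem commute_of_forall_trace_mul_lie_eq_zero {Q G : Matrix n n ℝ} (hQ : Qᵀ = Q) (hG : Gᵀ = G)
    (h : ∀ A : Matrix n n ℝ, Aᵀ = -A → (Gᵀ * (A * Q - Q * A)).trace = 0) : Q * G = G * Q := by
  set N := Q * G - G * Q with hN
  have hNskew : Nᵀ = -N := by
    rw [hN, transpose_sub, transpose_mul, transpose_mul, hQ, hG, neg_sub]
  have hNN : (N * N).trace = 0 := by
    have := h N hNskew
    rwa [hG, mul_sub, trace_sub, ← mul_assoc, ← mul_assoc, trace_mul_cycle G N Q,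
      ← trace_sub, ← sub_mul, ← hN] at this
  have hN0 : N = 0 := by
    rw [← trace_conjTranspose_mul_self_eq_zero_iff, conjTranspose_eq_transpose_of_trivial,
      hNskew, neg_mul, trace_neg, hNN, neg_zero]
  exact sub_eq_zero.mp hN0

end Trace

section Exp

variable {n : Type*} [Fintype n] [DecidableEq n]

theorem transpose_exp_mul_exp_of_transpose_eq_neg {A : Matrix n n ℝ} (hA : Aᵀ = -A) :
    (exp A)ᵀ * exp A = 1 := by
  rw [← exp_transpose, hA, ← exp_add_of_commute _ _ (Commute.neg_left (Commute.refl A)),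
    neg_add_cancel, exp_zero]

/-- `exp A = exp (A / 2) ^ 2` has nonnegative determinant, and an orthogonal matrix has
determinant `±1`. -/
theorem det_exp_of_transpose_eq_neg {A : Matrix n n ℝ} (hA : Aᵀ = -A) : (exp A).det = 1 := by
  have hhalf : ((1 / 2 : ℝ) • A)ᵀ = -((1 / 2 : ℝ) • A) := by rw [transpose_smul, hA, smul_neg]
  have hsq := congrArg det (transpose_exp_mul_exp_of_transpose_eq_neg hhalf)
  rw [det_mul, det_transpose, det_one] at hsq
  rw [← hsq, ← det_mul, ← exp_add_of_commute _ _ (Commute.refl _), ← add_smul]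
  norm_num

/-- The exponential needs a normed algebra structure; `HasDerivAt` only sees the product
topology, which every matrix norm induces. -/
theorem hasDerivAt_exp_smul_mul_mul_transpose (A Q : Matrix n n ℝ) :
    HasDerivAt (fun t : ℝ => exp (t • A) * Q * (exp (t • A))ᵀ) (A * Q + Q * Aᵀ) 0 := by
  open scoped Norms.Operator in
  have hexp (B : Matrix n n ℝ) : HasDerivAt (fun t : ℝ => exp (t • B)) B 0 := by
    have := hasDerivAt_exp_smul_const (𝕂 := ℝ) B 0
    rwa [zero_smul, exp_zero, one_mul] at this
  simp_rw [← exp_transpose, transpose_smul]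
  open scoped Norms.Operator in
  have := ((hexp A).mul_const Q).mul (hexp Aᵀ)
  simp only [zero_smul, exp_zero, one_mul, mul_one] at this
  exact this

end Exp

end Matrix

theorem DifferentiableAt.fderiv_apply_eq_of_comp_eq {𝕜 E F : Type*} [NontriviallyNormedField 𝕜]
    [NormedAddCommGroup E] [NormedSpace 𝕜 E] [NormedAddCommGroup F] [NormedSpace 𝕜 F]
    {φ : E → F} {x v₁ v₂ : E} {c₁ c₂ : 𝕜 → E} {t : 𝕜} (hφ : DifferentiableAt 𝕜 φ x)
    (h₁ : HasDerivAt c₁ v₁ t) (h₂ : HasDerivAt c₂ v₂ t) (hc₁ : c₁ t = x) (hc₂ : c₂ t = x)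
    (h : φ ∘ c₁ = φ ∘ c₂) : fderiv 𝕜 φ x v₁ = fderiv 𝕜 φ x v₂ := by
  have d₁ := hφ.hasFDerivAt.comp_hasDerivAt_of_eq t h₁ hc₁.symm
  have d₂ := hφ.hasFDerivAt.comp_hasDerivAt_of_eq t h₂ hc₂.symm
  exact (h ▸ d₁).unique d₂

theorem gradient_commutes_of_isotropic_general (d : ℕ)
    (φ : Matrix (Fin d) (Fin d) ℝ → ℝ) (hφ : Differentiable ℝ φ)
    (hrot : ∀ (X R : Matrix (Fin d) (Fin d) ℝ), Rᵀ * R = 1 → R.det = 1 →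
      φ (R * X * Rᵀ) = φ X)
    (htrans : ∀ X : Matrix (Fin d) (Fin d) ℝ, φ Xᵀ = φ X)
    (Q G : Matrix (Fin d) (Fin d) ℝ) (hQ : Qᵀ = Q)
    (hG : ∀ Y : Matrix (Fin d) (Fin d) ℝ, fderiv ℝ φ Q Y = (Gᵀ * Y).trace) :
    Q * G = G * Q := by
  have hline (Y : Matrix (Fin d) (Fin d) ℝ) : HasDerivAt (fun t : ℝ => Q + t • Y) Y 0 :=
    (((hasDerivAt_id' (0 : ℝ)).smul_const Y).const_add Q).congr_deriv (one_smul ℝ Y)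
  have hGsym : Gᵀ = G := by
    refine transpose_eq_of_forall_trace_mul_transpose fun Y => ?_
    rw [← hG, ← hG]
    refine (hφ Q).fderiv_apply_eq_of_comp_eq (hline Yᵀ) (hline Y) (by simp) (by simp) ?_
    ext t
    simp only [Function.comp_apply, ← htrans (Q + t • Yᵀ), transpose_add, transpose_smul,
      transpose_transpose, hQ]
  refine commute_of_forall_trace_mul_lie_eq_zero hQ hGsym fun A hA => ?_
  have hskew (t : ℝ) : (t • A)ᵀ = -(t • A) := by rw [transpose_smul, hA, smul_neg]
  have hcurve := hasDerivAt_exp_smul_mul_mul_transpose A Q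
  rw [hA, mul_neg, ← sub_eq_add_neg] at hcurve
  rw [← hG, ← (fderiv ℝ φ Q).map_zero]
  refine (hφ Q).fderiv_apply_eq_of_comp_eq hcurve (hasDerivAt_const 0 Q) (by simp) rfl ?_
  ext t
  exact hrot Q _ (transpose_exp_mul_exp_of_transpose_eq_neg (hskew t))
    (det_exp_of_transpose_eq_neg (hskew t))

/-- If `φ : ℝ^{d×d} → ℝ` is differentiable and invariant under rotations
(`φ(R X Rᵀ) = φ(X)` for `R ∈ SO(d)`) and transposition, then for every symmetric matrix `Q`
the Frobenius gradient `∇φ(Q)` (the matrix `G` with `Dφ(Q)[Y] = tr(Gᵀ Y)` for all `Y`)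
commutes with `Q`. -/
theorem gradient_commutes_of_isotropic (d : ℕ) (hd : 2 ≤ d)
    (φ : Matrix (Fin d) (Fin d) ℝ → ℝ) (hφ : Differentiable ℝ φ)
    (hrot : ∀ (X R : Matrix (Fin d) (Fin d) ℝ), Rᵀ * R = 1 → R.det = 1 →
      φ (R * X * Rᵀ) = φ X)
    (htrans : ∀ X : Matrix (Fin d) (Fin d) ℝ, φ Xᵀ = φ X)
    (Q G : Matrix (Fin d) (Fin d) ℝ) (hQ : Qᵀ = Q)
    (hG : ∀ Y : Matrix (Fin d) (Fin d) ℝ, fderiv ℝ φ Q Y = (Gᵀ * Y).trace) :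
    Q * G = G * Q :=
  gradient_commutes_of_isotropic_general d φ hφ hrot htrans Q G hQ hG
end

section
/- Let d = 2 or 3, Λ > 0, L > 0, let u : ℝᵈ → ℝᵈ be smooth, I^d-periodic and divergence-free, and let Q : ℝᵈ → ℝ^{d×d} be smooth, I^d-periodic and symmetric-matrix valued. Then (with summation over repeated indices) L ∫_{I^d} Δu_i ∂_j( ∂_i Q_{mn} ∂_j Q_{nm} ) dx − L ∫_{I^d} ΔQ : Δ((u·∇)Q) dx = 2L ∫_{I^d} ∂_k(ΔQ) : (u·∇)(∂_k Q) dx. -/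
/-!
Write `A : C` for the symmetric pairing and `|A|² = A : A`. Expanding with the product rule and
commuting partial derivatives, the left-hand integrand minus the right-hand one equals
`½ Δu_i ∂_i|∇Q|² + ½ u_i ∂_i|ΔQ|² − 2 ∂_k(ΔQ : (u·∇)∂_kQ)`.
Since `u` and `Δu` are both divergence-free, the first two terms are the divergences of
`½ |∇Q|² Δu` and `½ |ΔQ|² u`, so the whole integrand is the divergence of a periodic vector field,
and its integral over the period cube vanishes by the divergence theorem (opposite faces cancel).
Only symmetry and bilinearity of the pairing enter, so the computation is done for any symmetric
continuous bilinear form; for matrices it is the Frobenius form, and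
`∂_iQ_{mn} ∂_jQ_{nm} = ∂_iQ : ∂_jQ` because `∂_iQ` is symmetric.
-/

open Matrix MeasureTheory

attribute [local instance] Matrix.normedAddCommGroup Matrix.normedSpace

noncomputable section

/-- The `m`-th partial derivative of a map defined on `ℝ^d`. -/
noncomputable def pderiv' {d : ℕ} {M : Type*} [NormedAddCommGroup M] [NormedSpace ℝ M]
    (m : Fin d) (F : (Fin d → ℝ) → M) (x : Fin d → ℝ) : M :=
  fderiv ℝ F x (Pi.single m 1)

/-- The Laplacian `Δ = Σ_m ∂_m ∂_m` of a map defined on `ℝ^d`. -/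
noncomputable def lap' {d : ℕ} {M : Type*} [NormedAddCommGroup M] [NormedSpace ℝ M]
    (F : (Fin d → ℝ) → M) (x : Fin d → ℝ) : M :=
  ∑ m : Fin d, pderiv' m (pderiv' m F) x

/-- The fundamental cube `I^d = [-Λπ/2, Λπ/2]^d`. -/
def cube (d : ℕ) (Λ : ℝ) : Set (Fin d → ℝ) :=
  Set.Icc (fun _ => -(Λ * Real.pi / 2)) (fun _ => Λ * Real.pi / 2)

/-- A map on `ℝ^d` is `I^d`-periodic if it is `Λπ`-periodic in each coordinate. -/
def IsCubePeriodic {d : ℕ} {M : Type*} (Λ : ℝ) (F : (Fin d → ℝ) → M) : Prop :=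
  ∀ (x : Fin d → ℝ) (m : Fin d), F (x + (Λ * Real.pi) • (Pi.single m 1 : Fin d → ℝ)) = F x

open scoped ContDiff

section Calculus

variable {d : ℕ} {M N P : Type*} [NormedAddCommGroup M] [NormedSpace ℝ M]
  [NormedAddCommGroup N] [NormedSpace ℝ N] [NormedAddCommGroup P] [NormedSpace ℝ P]
  {x : Fin d → ℝ}

@[fun_prop]
lemma ContDiff.pderiv' {F : (Fin d → ℝ) → M} (hF : ContDiff ℝ ∞ F) (i : Fin d) :
    ContDiff ℝ ∞ (pderiv' i F) :=
  (hF.fderiv_right le_rfl).clm_apply contDiff_const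

@[fun_prop]
lemma ContDiff.lap' {F : (Fin d → ℝ) → M} (hF : ContDiff ℝ ∞ F) : ContDiff ℝ ∞ (lap' F) :=
  ContDiff.sum fun i _ => (hF.pderiv' i).pderiv' i

lemma pderiv'_clm_comp (e : M →L[ℝ] N) {F : (Fin d → ℝ) → M} (hF : DifferentiableAt ℝ F x)
    (i : Fin d) : pderiv' i (fun y => e (F y)) x = e (pderiv' i F x) := by
  simp [pderiv', fderiv_fun_comp x e.differentiableAt hF]

lemma lap'_clm_comp (e : M →L[ℝ] N) {F : (Fin d → ℝ) → M} (hF : ContDiff ℝ ∞ F) :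
    lap' (fun y => e (F y)) x = e (lap' F x) := by
  have h : ∀ i, pderiv' i (fun y => e (F y)) = fun y => e (pderiv' i F y) :=
    fun i => funext fun y => pderiv'_clm_comp e (hF.differentiable (by simp) y) i
  simp only [_root_.lap', h, pderiv'_clm_comp e ((hF.pderiv' _).differentiable (by simp) x),
    map_sum]

lemma pderiv'_apply {ι : Type*} [Fintype ι] {F : (Fin d → ℝ) → ι → N}
    (hF : DifferentiableAt ℝ F x) (i : Fin d) (k : ι) :
    pderiv' i (fun y => F y k) x = pderiv' i F x k :=
  pderiv'_clm_comp (ContinuousLinearMap.proj k) hF i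

lemma lap'_apply {ι : Type*} [Fintype ι] {F : (Fin d → ℝ) → ι → N} (hF : ContDiff ℝ ∞ F)
    (k : ι) : lap' (fun y => F y k) x = lap' F x k :=
  lap'_clm_comp (ContinuousLinearMap.proj k) hF

lemma pderiv'_const (c : M) (i : Fin d) :
    pderiv' i (fun _ : Fin d → ℝ => c) = fun _ => 0 := by
  funext y
  simp [pderiv']

lemma pderiv'_sum {ι : Type*} {s : Finset ι} {F : ι → (Fin d → ℝ) → M}
    (hF : ∀ k ∈ s, DifferentiableAt ℝ (F k) x) (i : Fin d) :
    pderiv' i (fun y => ∑ k ∈ s, F k y) x = ∑ k ∈ s, pderiv' i (F k) x := by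
  simp [pderiv', fderiv_fun_sum hF]

lemma pderiv'_add {F G : (Fin d → ℝ) → M} (hF : DifferentiableAt ℝ F x)
    (hG : DifferentiableAt ℝ G x) (i : Fin d) :
    pderiv' i (fun y => F y + G y) x = pderiv' i F x + pderiv' i G x := by
  simp [pderiv', fderiv_fun_add hF hG]

lemma pderiv'_sub {F G : (Fin d → ℝ) → M} (hF : DifferentiableAt ℝ F x)
    (hG : DifferentiableAt ℝ G x) (i : Fin d) :
    pderiv' i (fun y => F y - G y) x = pderiv' i F x - pderiv' i G x := by
  simp [pderiv', fderiv_fun_sub hF hG]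

lemma pderiv'_const_mul {f : (Fin d → ℝ) → ℝ} (hf : DifferentiableAt ℝ f x) (c : ℝ) (i : Fin d) :
    pderiv' i (fun y => c * f y) x = c * pderiv' i f x := by
  simp [pderiv', fderiv_const_mul hf]

lemma pderiv'_smul {f : (Fin d → ℝ) → ℝ} {F : (Fin d → ℝ) → M} (hf : DifferentiableAt ℝ f x)
    (hF : DifferentiableAt ℝ F x) (i : Fin d) :
    pderiv' i (fun y => f y • F y) x = pderiv' i f x • F x + f x • pderiv' i F x := by
  simp [pderiv', fderiv_fun_smul hf hF, add_comm]

lemma pderiv'_bilin (B : M →L[ℝ] N →L[ℝ] P) {F : (Fin d → ℝ) → M} {G : (Fin d → ℝ) → N}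
    (hF : DifferentiableAt ℝ F x) (hG : DifferentiableAt ℝ G x) (i : Fin d) :
    pderiv' i (fun y => B (F y) (G y)) x = B (pderiv' i F x) (G x) + B (F x) (pderiv' i G x) := by
  simp [pderiv', B.fderiv_of_bilinear hF hG, add_comm]

lemma pderiv'_comm {F : (Fin d → ℝ) → M} (hF : ContDiff ℝ ∞ F) (i j : Fin d) :
    pderiv' i (pderiv' j F) x = pderiv' j (pderiv' i F) x := by
  have hF' : DifferentiableAt ℝ (fderiv ℝ F) x :=
    (hF.fderiv_right (m := ∞) le_rfl).differentiable (by simp) x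
  have h : ∀ k l,
      pderiv' k (pderiv' l F) x = fderiv ℝ (fderiv ℝ F) x (Pi.single k 1) (Pi.single l 1) := by
    intro k l
    unfold pderiv'
    rw [fderiv_clm_apply hF' (differentiableAt_const _)]
    simp
  rw [h, h]
  exact (hF.contDiffAt.isSymmSndFDerivAt (by simpa using ENat.LEInfty.out)) _ _

lemma pderiv'_lap' {F : (Fin d → ℝ) → M} (hF : ContDiff ℝ ∞ F) (i : Fin d) :
    pderiv' i (lap' F) x = lap' (pderiv' i F) x := by
  have hcomm : ∀ j, pderiv' j (pderiv' i F) = pderiv' i (pderiv' j F) :=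
    fun j => funext fun y => pderiv'_comm hF j i
  change pderiv' i (fun y => ∑ j, pderiv' j (pderiv' j F) y) x = _
  rw [pderiv'_sum fun j _ => ((hF.pderiv' j).pderiv' j).differentiable (by simp) x]
  simp only [_root_.lap', hcomm, pderiv'_comm (hF.pderiv' _) i]

lemma lap'_sum {ι : Type*} {s : Finset ι} {F : ι → (Fin d → ℝ) → M}
    (hF : ∀ k ∈ s, ContDiff ℝ ∞ (F k)) :
    lap' (fun y => ∑ k ∈ s, F k y) x = ∑ k ∈ s, lap' (F k) x := by
  have h : ∀ i, pderiv' i (fun y => ∑ k ∈ s, F k y) = fun y => ∑ k ∈ s, pderiv' i (F k) y :=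
    fun i => funext fun y => pderiv'_sum (fun k hk => (hF k hk).differentiable (by simp) y) i
  simp only [_root_.lap', h]
  rw [Finset.sum_comm]
  exact Finset.sum_congr rfl fun i _ =>
    pderiv'_sum (fun k hk => ((hF k hk).pderiv' i).differentiable (by simp) x) i

lemma lap'_smul {f : (Fin d → ℝ) → ℝ} {F : (Fin d → ℝ) → M} (hf : ContDiff ℝ ∞ f)
    (hF : ContDiff ℝ ∞ F) :
    lap' (fun y => f y • F y) x
      = lap' f x • F x + (2 : ℝ) • ∑ i, pderiv' i f x • pderiv' i F x + f x • lap' F x := by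
  have hf' := hf.differentiable (by simp)
  have hF' := hF.differentiable (by simp)
  have h : ∀ i, pderiv' i (fun y => f y • F y)
      = fun y => pderiv' i f y • F y + f y • pderiv' i F y :=
    fun i => funext fun y => pderiv'_smul (hf' y) (hF' y) i
  have h2 : ∀ i, pderiv' i (fun y => pderiv' i f y • F y + f y • pderiv' i F y) x
      = pderiv' i (pderiv' i f) x • F x + (2 : ℝ) • (pderiv' i f x • pderiv' i F x)
        + f x • pderiv' i (pderiv' i F) x := by
    intro i
    have := (hf.pderiv' i).differentiable (by simp) x
    have := (hF.pderiv' i).differentiable (by simp) x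
    rw [pderiv'_add (by fun_prop) (by fun_prop), pderiv'_smul (by fun_prop) (by fun_prop),
      pderiv'_smul (by fun_prop) (by fun_prop)]
    module
  simp only [_root_.lap', h, h2, Finset.sum_add_distrib, Finset.sum_smul, Finset.smul_sum]

lemma sum_pderiv'_mul_of_div_eq_zero {w : (Fin d → ℝ) → Fin d → ℝ} {φ : (Fin d → ℝ) → ℝ}
    (hw : DifferentiableAt ℝ w x) (hφ : DifferentiableAt ℝ φ x)
    (hdiv : ∑ i, pderiv' i w x i = 0) :
    ∑ i, pderiv' i (fun y => w y i * φ y) x = ∑ i, w x i * pderiv' i φ x := by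
  have h : ∀ i, pderiv' i (fun y => w y i * φ y) x
      = pderiv' i w x i * φ x + w x i * pderiv' i φ x := fun i => by
    simpa only [smul_eq_mul, pderiv'_apply hw] using
      pderiv'_smul (f := fun y => w y i) (by fun_prop) hφ i
  rw [Finset.sum_congr rfl fun i _ => h i, Finset.sum_add_distrib, ← Finset.sum_mul, hdiv,
    zero_mul, zero_add]

lemma sum_pderiv'_lap'_of_div_eq_zero {u : (Fin d → ℝ) → Fin d → ℝ} (hu : ContDiff ℝ ∞ u)
    (hdiv : ∀ y, ∑ i, pderiv' i u y i = 0) :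
    ∑ i, pderiv' i (lap' u) x i = 0 := by
  have hcomp : ∀ i, pderiv' i (fun z => u z i) = fun y => pderiv' i u y i :=
    fun i => funext fun y => pderiv'_apply (hu.differentiable (by simp) y) i i
  calc ∑ i, pderiv' i (lap' u) x i
      = ∑ i, lap' (pderiv' i (fun z => u z i)) x := by
        simp only [pderiv'_lap' hu, hcomp, lap'_apply (hu.pderiv' _)]
    _ = lap' (fun y => ∑ i, pderiv' i (fun z => u z i) y) x :=
        (lap'_sum fun i _ => (contDiff_pi.mp hu i).pderiv' i).symm
    _ = 0 := by simp [hcomp, hdiv, lap', pderiv'_const]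

end Calculus

section Periodic

variable {d : ℕ} {M : Type*} [NormedAddCommGroup M] [NormedSpace ℝ M] {Λ : ℝ}

lemma IsCubePeriodic.pderiv' {F : (Fin d → ℝ) → M} (hF : IsCubePeriodic Λ F) (i : Fin d) :
    IsCubePeriodic Λ (pderiv' i F) := by
  intro x m
  have h : (fun y => F (y + (Λ * Real.pi) • (Pi.single m 1 : Fin d → ℝ))) = F :=
    funext fun y => hF y m
  simp only [_root_.pderiv', ← fderiv_comp_add_right, h]

lemma IsCubePeriodic.lap' {F : (Fin d → ℝ) → M} (hF : IsCubePeriodic Λ F) :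
    IsCubePeriodic Λ (lap' F) := fun x m =>
  Finset.sum_congr rfl fun i _ => (hF.pderiv' i).pderiv' i x m

lemma Fin.insertNth_add_smul_single {n : ℕ} (j : Fin (n + 1)) (c T : ℝ) (y : Fin n → ℝ) :
    j.insertNth (c + T) y = j.insertNth c y + T • (Pi.single j 1 : Fin (n + 1) → ℝ) := by
  ext k
  rcases Fin.eq_self_or_eq_succAbove j k with rfl | ⟨k, rfl⟩ <;>
    simp [Fin.succAbove_ne]

variable {E : Type*} [NormedAddCommGroup E] [NormedSpace ℝ E]

theorem integral_sum_pderiv'_eq_zero {G : Fin d → (Fin d → ℝ) → E}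
    (hG : ∀ i, ContDiff ℝ 1 (G i)) (hper : ∀ i, IsCubePeriodic Λ (G i)) :
    ∫ x in cube d Λ, ∑ i, pderiv' i (G i) x = 0 := by
  rcases d with _ | n
  · simp
  rcases lt_or_ge Λ 0 with hΛ | hΛ
  · have hempty : cube (n + 1) Λ = ∅ := Set.Icc_eq_empty fun h => by
      have := h 0
      nlinarith [Real.pi_pos]
    simp [hempty]
  have hle : (fun _ => -(Λ * Real.pi / 2) : Fin (n + 1) → ℝ) ≤ fun _ => Λ * Real.pi / 2 :=
    fun _ => by nlinarith [Real.pi_pos]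
  rw [cube, show (fun x => ∑ i, pderiv' i (G i) x)
      = fun x => ∑ i, fderiv ℝ (G i) x (Pi.single i 1) from rfl,
    integral_divergence_of_hasFDerivAt_off_countable' _ _ hle G (fun i x => fderiv ℝ (G i) x)
    ∅ Set.countable_empty (fun i => (hG i).continuous.continuousOn)
    (fun x _ i => ((hG i).differentiable one_ne_zero x).hasFDerivAt)
    (Continuous.integrableOn_Icc (continuous_finsetSum _ fun i _ =>
      ((hG i).continuous_fderiv one_ne_zero).clm_apply continuous_const))]
  refine Finset.sum_eq_zero fun i _ => ?_
  have hface : ∀ y, G i (i.insertNth (Λ * Real.pi / 2) y)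
      = G i (i.insertNth (-(Λ * Real.pi / 2)) y) := fun y => by
    conv_lhs => rw [show Λ * Real.pi / 2 = -(Λ * Real.pi / 2) + Λ * Real.pi by ring]
    rw [Fin.insertNth_add_smul_single, hper i]
  simp only [hface, sub_self]

end Periodic

section Cancellation

variable {d : ℕ} {E : Type*} [NormedAddCommGroup E] [NormedSpace ℝ E]
  {B : E →L[ℝ] E →L[ℝ] ℝ} {x : Fin d → ℝ} {u : (Fin d → ℝ) → Fin d → ℝ}
  {Q : (Fin d → ℝ) → E}

lemma pderiv'_bilin_self (hB : ∀ a b, B a b = B b a) {F : (Fin d → ℝ) → E}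
    (hF : DifferentiableAt ℝ F x) (i : Fin d) :
    pderiv' i (fun y => B (F y) (F y)) x = 2 * B (pderiv' i F x) (F x) := by
  rw [pderiv'_bilin B hF hF, hB (F x)]
  ring

lemma sum_lap'_mul_pderiv'_bilin (hB : ∀ a b, B a b = B b a) (hQ : ContDiff ℝ ∞ Q) :
    ∑ i, ∑ j, lap' u x i * pderiv' j (fun y => B (pderiv' i Q y) (pderiv' j Q y)) x
      = 1 / 2 * ∑ i, lap' u x i * pderiv' i (fun y => ∑ j, B (pderiv' j Q y) (pderiv' j Q y)) x
        + ∑ i, lap' u x i * B (pderiv' i Q x) (lap' Q x) := by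
  have hQ' : ∀ i, DifferentiableAt ℝ (pderiv' i Q) x :=
    fun i => (hQ.pderiv' i).differentiable (by simp) x
  have hprod : ∀ i j, pderiv' j (fun y => B (pderiv' i Q y) (pderiv' j Q y)) x
      = B (pderiv' i (pderiv' j Q) x) (pderiv' j Q x)
        + B (pderiv' i Q x) (pderiv' j (pderiv' j Q) x) := by
    intro i j
    rw [pderiv'_bilin B (hQ' i) (hQ' j), pderiv'_comm hQ]
  have hgrad : ∀ i, pderiv' i (fun y => ∑ j, B (pderiv' j Q y) (pderiv' j Q y)) x
      = ∑ j, 2 * B (pderiv' i (pderiv' j Q) x) (pderiv' j Q x) := by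
    intro i
    rw [pderiv'_sum fun j _ => by fun_prop]
    exact Finset.sum_congr rfl fun j _ => pderiv'_bilin_self hB (hQ' j) i
  simp only [hprod, hgrad, lap', map_sum, Finset.mul_sum, ← Finset.sum_add_distrib]
  refine Finset.sum_congr rfl fun i _ => Finset.sum_congr rfl fun j _ => ?_
  ring

lemma bilin_lap'_lap'_sum_smul_pderiv' (hB : ∀ a b, B a b = B b a) (hu : ContDiff ℝ ∞ u)
    (hQ : ContDiff ℝ ∞ Q) :
    B (lap' Q x) (lap' (fun y => ∑ i, u y i • pderiv' i Q y) x)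
      = ∑ i, lap' u x i * B (pderiv' i Q x) (lap' Q x)
        + 2 * ∑ i, ∑ a, pderiv' a u x i * B (lap' Q x) (pderiv' a (pderiv' i Q) x)
        + 1 / 2 * ∑ i, u x i * pderiv' i (fun y => B (lap' Q y) (lap' Q y)) x := by
  have hui : ∀ i, ContDiff ℝ ∞ (fun y => u y i) := contDiff_pi.mp hu
  have hlap : ∀ i, lap' (fun y => u y i • pderiv' i Q y) x
      = lap' u x i • pderiv' i Q x + (2 : ℝ) • ∑ a, pderiv' a u x i • pderiv' a (pderiv' i Q) x
        + u x i • pderiv' i (lap' Q) x := by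
    intro i
    rw [lap'_smul (hui i) (hQ.pderiv' i), lap'_apply hu, pderiv'_lap' hQ]
    simp only [pderiv'_apply (hu.differentiable (by simp) x)]
  rw [lap'_sum (F := fun i y => u y i • pderiv' i Q y) fun i _ => by fun_prop]
  simp only [hlap, pderiv'_bilin_self hB ((hQ.lap').differentiable (by simp) x), map_sum, map_add,
    map_smul, smul_eq_mul, Finset.sum_add_distrib, Finset.mul_sum, hB (lap' Q x) (pderiv' _ Q x)]
  congr 1
  exact Finset.sum_congr rfl fun i _ => by rw [hB]; ring

lemma sum_bilin_pderiv'_lap'_sum_smul_pderiv' (hB : ∀ a b, B a b = B b a) (hu : ContDiff ℝ ∞ u)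
    (hQ : ContDiff ℝ ∞ Q) :
    ∑ k, B (pderiv' k (lap' Q) x) (∑ i, u x i • pderiv' i (pderiv' k Q) x)
      = ∑ k, pderiv' k (fun y => B (lap' Q y) (∑ i, u y i • pderiv' i (pderiv' k Q) y)) x
        - ∑ i, ∑ a, pderiv' a u x i * B (lap' Q x) (pderiv' a (pderiv' i Q) x)
        - 1 / 2 * ∑ i, u x i * pderiv' i (fun y => B (lap' Q y) (lap' Q y)) x := by
  have hud : Differentiable ℝ u := hu.differentiable (by simp)
  have hQd : ∀ i k, Differentiable ℝ (pderiv' i (pderiv' k Q)) :=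
    fun i k => ((hQ.pderiv' k).pderiv' i).differentiable (by simp)
  have hQl : Differentiable ℝ (lap' Q) := hQ.lap'.differentiable (by simp)
  have hprod : ∀ k, pderiv' k (fun y => B (lap' Q y) (∑ i, u y i • pderiv' i (pderiv' k Q) y)) x
      = B (pderiv' k (lap' Q) x) (∑ i, u x i • pderiv' i (pderiv' k Q) x)
        + ∑ i, (pderiv' k u x i * B (lap' Q x) (pderiv' i (pderiv' k Q) x)
          + u x i * B (lap' Q x) (pderiv' k (pderiv' i (pderiv' k Q)) x)) := by
    intro k
    rw [pderiv'_bilin B (by fun_prop) (by fun_prop), pderiv'_sum fun i _ => by fun_prop]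
    have hsmul : ∀ i, pderiv' k (fun y => u y i • pderiv' i (pderiv' k Q) y) x
        = pderiv' k u x i • pderiv' i (pderiv' k Q) x
          + u x i • pderiv' k (pderiv' i (pderiv' k Q)) x := fun i => by
      rw [pderiv'_smul (by fun_prop) (by fun_prop), pderiv'_apply (hud x)]
    simp only [hsmul, map_sum, map_add, map_smul, smul_eq_mul]
  have hlap : ∀ i, ∑ k, pderiv' k (pderiv' i (pderiv' k Q)) x = pderiv' i (lap' Q) x := by
    intro i
    rw [Finset.sum_congr rfl fun k _ => pderiv'_comm (hQ.pderiv' k) k i]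
    exact (pderiv'_sum (fun k _ => by fun_prop) i).symm
  have hswap : ∑ k, ∑ i, pderiv' k u x i * B (lap' Q x) (pderiv' i (pderiv' k Q) x)
      = ∑ i, ∑ a, pderiv' a u x i * B (lap' Q x) (pderiv' a (pderiv' i Q) x) := by
    rw [Finset.sum_comm]
    simp only [pderiv'_comm hQ]
  have hadv : ∑ k, ∑ i, u x i * B (lap' Q x) (pderiv' k (pderiv' i (pderiv' k Q)) x)
      = 1 / 2 * ∑ i, u x i * pderiv' i (fun y => B (lap' Q y) (lap' Q y)) x := by
    rw [Finset.sum_comm, Finset.mul_sum]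
    refine Finset.sum_congr rfl fun i _ => ?_
    rw [← Finset.mul_sum, ← map_sum, hlap, pderiv'_bilin_self hB (hQl x), hB]
    ring
  simp only [hprod, Finset.sum_add_distrib, hswap, hadv]
  ring

def cancellationFlux (B : E →L[ℝ] E →L[ℝ] ℝ) (u : (Fin d → ℝ) → Fin d → ℝ)
    (Q : (Fin d → ℝ) → E) (k : Fin d) (y : Fin d → ℝ) : ℝ :=
  1 / 2 * (lap' u y k * ∑ j, B (pderiv' j Q y) (pderiv' j Q y) + u y k * B (lap' Q y) (lap' Q y))
    - 2 * B (lap' Q y) (∑ i, u y i • pderiv' i (pderiv' k Q) y)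

lemma contDiff_cancellationFlux (hu : ContDiff ℝ ∞ u) (hQ : ContDiff ℝ ∞ Q) (k : Fin d) :
    ContDiff ℝ ∞ (cancellationFlux B u Q k) := by
  unfold cancellationFlux
  fun_prop

lemma isCubePeriodic_cancellationFlux {Λ : ℝ} (hu : IsCubePeriodic Λ u)
    (hQ : IsCubePeriodic Λ Q) (k : Fin d) : IsCubePeriodic Λ (cancellationFlux B u Q k) :=
  fun x m => by
    simp only [cancellationFlux, hu x m, hu.lap' x m, hQ.lap' x m, (hQ.pderiv' · x m),
      ((hQ.pderiv' k).pderiv' · x m)]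

lemma sum_pderiv'_cancellationFlux (hB : ∀ a b, B a b = B b a) (hu : ContDiff ℝ ∞ u)
    (hdiv : ∀ x, ∑ i, pderiv' i u x i = 0) (hQ : ContDiff ℝ ∞ Q) :
    ∑ k, pderiv' k (cancellationFlux B u Q k) x
      = ∑ i, ∑ j, lap' u x i * pderiv' j (fun y => B (pderiv' i Q y) (pderiv' j Q y)) x
        - B (lap' Q x) (lap' (fun y => ∑ i, u y i • pderiv' i Q y) x)
        - 2 * ∑ k, B (pderiv' k (lap' Q) x) (∑ i, u x i • pderiv' i (pderiv' k Q) x) := by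
  have hud : Differentiable ℝ u := hu.differentiable (by simp)
  have hlud : Differentiable ℝ (lap' u) := hu.lap'.differentiable (by simp)
  have hQd : ∀ i, Differentiable ℝ (pderiv' i Q) :=
    fun i => (hQ.pderiv' i).differentiable (by simp)
  have hQdd : ∀ i k, Differentiable ℝ (pderiv' i (pderiv' k Q)) :=
    fun i k => ((hQ.pderiv' k).pderiv' i).differentiable (by simp)
  have hlQd : Differentiable ℝ (lap' Q) := hQ.lap'.differentiable (by simp)
  have hderiv : ∀ k, pderiv' k (cancellationFlux B u Q k) x
      = 1 / 2 * (pderiv' k (fun y => lap' u y k * ∑ j, B (pderiv' j Q y) (pderiv' j Q y)) x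
          + pderiv' k (fun y => u y k * B (lap' Q y) (lap' Q y)) x)
        - 2 * pderiv' k (fun y => B (lap' Q y) (∑ i, u y i • pderiv' i (pderiv' k Q) y)) x := by
    intro k
    unfold cancellationFlux
    rw [pderiv'_sub (by fun_prop) (by fun_prop), pderiv'_const_mul (by fun_prop),
      pderiv'_add (by fun_prop) (by fun_prop), pderiv'_const_mul (by fun_prop)]
  rw [Finset.sum_congr rfl fun k _ => hderiv k, Finset.sum_sub_distrib, ← Finset.mul_sum,
    ← Finset.mul_sum, Finset.sum_add_distrib,
    sum_pderiv'_mul_of_div_eq_zero (hlud x) (by fun_prop)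
      (sum_pderiv'_lap'_of_div_eq_zero hu hdiv),
    sum_pderiv'_mul_of_div_eq_zero (hud x) (by fun_prop) (hdiv x),
    sum_lap'_mul_pderiv'_bilin hB hQ, bilin_lap'_lap'_sum_smul_pderiv' hB hu hQ,
    sum_bilin_pderiv'_lap'_sum_smul_pderiv' hB hu hQ]
  ring

theorem integral_higher_order_cancellation (hB : ∀ a b, B a b = B b a) {Λ : ℝ}
    (hu : ContDiff ℝ ∞ u) (huper : IsCubePeriodic Λ u) (hdiv : ∀ x, ∑ i, pderiv' i u x i = 0)
    (hQ : ContDiff ℝ ∞ Q) (hQper : IsCubePeriodic Λ Q) :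
    (∫ x in cube d Λ,
        ∑ i, ∑ j, lap' u x i * pderiv' j (fun y => B (pderiv' i Q y) (pderiv' j Q y)) x)
      - (∫ x in cube d Λ, B (lap' Q x) (lap' (fun y => ∑ i, u y i • pderiv' i Q y) x))
      = 2 * ∫ x in cube d Λ,
          ∑ k, B (pderiv' k (lap' Q) x) (∑ i, u x i • pderiv' i (pderiv' k Q) x) := by
  have hint : ∀ f : (Fin d → ℝ) → ℝ, ContDiff ℝ ∞ f → IntegrableOn f (cube d Λ) :=
    fun f hf => hf.continuous.integrableOn_Icc
  rw [← integral_sub (hint _ (by fun_prop)) (hint _ (by fun_prop)), ← sub_eq_zero,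
    ← integral_const_mul, ← integral_sub (hint _ (by fun_prop)) (hint _ (by fun_prop))]
  simp only [← sum_pderiv'_cancellationFlux hB hu hdiv hQ]
  exact integral_sum_pderiv'_eq_zero
    (fun k => (contDiff_cancellationFlux hu hQ k).of_le (by simp))
    (isCubePeriodic_cancellationFlux huper hQper)

end Cancellation

section Matrix

variable {d n : ℕ} {x : Fin d → ℝ}

def frobeniusForm (n : ℕ) :
    Matrix (Fin n) (Fin n) ℝ →L[ℝ] Matrix (Fin n) (Fin n) ℝ →L[ℝ] ℝ :=
  (((LinearMap.mul ℝ (Matrix (Fin n) (Fin n) ℝ)).compl₁₂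
    (Matrix.transposeLinearEquiv (Fin n) (Fin n) ℝ ℝ).toLinearMap LinearMap.id).compr₂
      (Matrix.traceLinearMap (Fin n) ℝ ℝ)).toContinuousBilinearMap

lemma frobeniusForm_apply (A C : Matrix (Fin n) (Fin n) ℝ) :
    frobeniusForm n A C = (Aᵀ * C).trace := rfl

lemma frobeniusForm_comm (A C : Matrix (Fin n) (Fin n) ℝ) :
    frobeniusForm n A C = frobeniusForm n C A := by
  rw [frobeniusForm_apply, frobeniusForm_apply, ← Matrix.trace_transpose, Matrix.transpose_mul,
    Matrix.transpose_transpose]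

lemma pderiv'_transpose {Q : (Fin d → ℝ) → Matrix (Fin n) (Fin n) ℝ}
    (hQ : DifferentiableAt ℝ Q x) (i : Fin d) :
    pderiv' i (fun y => (Q y)ᵀ) x = (pderiv' i Q x)ᵀ :=
  pderiv'_clm_comp
    (Matrix.transposeLinearEquiv (Fin n) (Fin n) ℝ ℝ).toLinearMap.toContinuousLinearMap hQ i

end Matrix

theorem higher_order_cancellation_general (d : ℕ)
    (Λ : ℝ) (L : ℝ)
    (u : (Fin d → ℝ) → (Fin d → ℝ)) (hu : ContDiff ℝ (⊤ : ℕ∞) u)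
    (huper : IsCubePeriodic Λ u)
    (hdiv : ∀ x, ∑ i : Fin d, pderiv' i u x i = 0)
    (Q : (Fin d → ℝ) → Matrix (Fin d) (Fin d) ℝ) (hQ : ContDiff ℝ (⊤ : ℕ∞) Q)
    (hQper : IsCubePeriodic Λ Q) (hQsym : ∀ x, (Q x)ᵀ = Q x) :
    L * (∫ x in cube d Λ,
          ∑ i : Fin d, ∑ j : Fin d, lap' u x i *
            pderiv' j (fun y => ∑ m : Fin d, ∑ n : Fin d,
              pderiv' i Q y m n * pderiv' j Q y n m) x)
      - L * (∫ x in cube d Λ,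
          ((lap' Q x)ᵀ * lap' (fun y => ∑ i : Fin d, u y i • pderiv' i Q y) x).trace)
      = 2 * L * ∫ x in cube d Λ,
          ∑ k : Fin d,
            ((pderiv' k (fun y => lap' Q y) x)ᵀ *
              (∑ i : Fin d, u x i • pderiv' i (fun y => pderiv' k Q y) x)).trace := by
  have hQ'sym : ∀ i y, (pderiv' i Q y)ᵀ = pderiv' i Q y := fun i y => by
    rw [← pderiv'_transpose (hQ.differentiable (by simp) y), funext hQsym]
  have hpair : ∀ i j y, ∑ m, ∑ n, pderiv' i Q y m n * pderiv' j Q y n m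
      = frobeniusForm d (pderiv' i Q y) (pderiv' j Q y) := fun i j y => by
    rw [frobeniusForm_apply, hQ'sym]
    simp only [Matrix.trace, Matrix.diag, Matrix.mul_apply]
  have key :=
    integral_higher_order_cancellation (frobeniusForm_comm (n := d)) hu huper hdiv hQ hQper
  simp only [hpair]
  rw [← mul_sub, mul_comm 2 L, mul_assoc]
  exact congrArg (L * ·) key

/-- For `u` smooth, `I^d`-periodic and divergence-free and `Q` smooth,
`I^d`-periodic and symmetric-matrix valued (`d ∈ {2,3}`, `L > 0`), one has (with
summation over repeated indices)
`L ∫ Δu_i ∂_j(∂_i Q_{mn} ∂_j Q_{nm}) dx − L ∫ ΔQ : Δ((u·∇)Q) dx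
  = 2L ∫ ∂_k(ΔQ) : (u·∇)(∂_k Q) dx`. -/
theorem higher_order_cancellation (d : ℕ) (hd : d = 2 ∨ d = 3)
    (Λ : ℝ) (hΛ : 0 < Λ) (L : ℝ) (hL : 0 < L)
    (u : (Fin d → ℝ) → (Fin d → ℝ)) (hu : ContDiff ℝ (⊤ : ℕ∞) u)
    (huper : IsCubePeriodic Λ u)
    (hdiv : ∀ x, ∑ i : Fin d, pderiv' i u x i = 0)
    (Q : (Fin d → ℝ) → Matrix (Fin d) (Fin d) ℝ) (hQ : ContDiff ℝ (⊤ : ℕ∞) Q)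
    (hQper : IsCubePeriodic Λ Q) (hQsym : ∀ x, (Q x)ᵀ = Q x) :
    L * (∫ x in cube d Λ,
          ∑ i : Fin d, ∑ j : Fin d, lap' u x i *
            pderiv' j (fun y => ∑ m : Fin d, ∑ n : Fin d,
              pderiv' i Q y m n * pderiv' j Q y n m) x)
      - L * (∫ x in cube d Λ,
          ((lap' Q x)ᵀ * lap' (fun y => ∑ i : Fin d, u y i • pderiv' i Q y) x).trace)
      = 2 * L * ∫ x in cube d Λ,
          ∑ k : Fin d,
            ((pderiv' k (fun y => lap' Q y) x)ᵀ *
              (∑ i : Fin d, u x i • pderiv' i (fun y => pderiv' k Q y) x)).trace :=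
  higher_order_cancellation_general d Λ L u hu huper hdiv Q hQ hQper hQsym
end
end
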